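/- Identify ℝ³ with the pure quaternions via (x,y,z) ↦ x i + y j + z k. Let R be the set of the 12 roots of A₃ (the vectors whose coordinates are a permutation of (±1,±1,0)), each normalized to unit length. Then the subgroup of the unit group ℍˣ of the real quaternions generated by all products p·q with p, q ∈ R (regarded as pure unit quaternions) equals the set of the 24 Hurwitz units {±1, ±i, ±j, ±k, (±1±i±j±k)/2}; in particular the 12 reflections of A₃ generate exactly 24 rotors. -/

import Mathlib

noncomputable section

/-- The quaternion unit `i`. -/
def qi : Quaternion ℝ := ⟨0, 1, 0, 0⟩
/-- The quaternion unit `j`. -/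
def qj : Quaternion ℝ := ⟨0, 0, 1, 0⟩
/-- The quaternion unit `k`. -/
def qk : Quaternion ℝ := ⟨0, 0, 0, 1⟩

/-- The sign set `{1, -1}`. -/
def pm : Set ℝ := {1, -1}

/-- The 12 roots of `A₃` (the permutations of `(±1, ±1, 0)`), normalized to
unit length and regarded as pure quaternions. -/
def rootsA3 : Set (Quaternion ℝ) :=
  {x | ∃ ε₁ ∈ pm, ∃ ε₂ ∈ pm,
    (x = (Real.sqrt 2)⁻¹ • (ε₁ • qi + ε₂ • qj) ∨
     x = (Real.sqrt 2)⁻¹ • (ε₁ • qi + ε₂ • qk) ∨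
     x = (Real.sqrt 2)⁻¹ • (ε₁ • qj + ε₂ • qk))}

/-- The set of units of ℍ of the form `p·q` with `p, q` normalized roots of
`A₃` (the rotors encoding composed reflections). -/
def rotorGenA3 : Set (Quaternion ℝ)ˣ :=
  {u | ∃ p ∈ rootsA3, ∃ q ∈ rootsA3, (u : Quaternion ℝ) = p * q}

/-- The 24 Hurwitz units `±1, ±i, ±j, ±k, (±1±i±j±k)/2`. -/
def hurwitzUnits : Set (Quaternion ℝ) :=
  {1, -1, qi, -qi, qj, -qj, qk, -qk} ∪
  {x | ∃ ε₀ ∈ pm, ∃ ε₁ ∈ pm, ∃ ε₂ ∈ pm, ∃ ε₃ ∈ pm,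
    x = (2 : ℝ)⁻¹ • (ε₀ • (1 : Quaternion ℝ) + ε₁ • qi + ε₂ • qj + ε₃ • qk)}

/-!
Each normalized root of `A₃` is `a / √2` for an integer quaternion `a` with two entries `±1`, so a
product of two of them is `a b / 2`. A finite computation over the integer quaternions shows that
the products `a b` are exactly the doubled Hurwitz units, and that the Hurwitz units are closed
under multiplication and conjugation, with `x x̄ = 1`. Hence the generating set of rotors is
already a subgroup: the 24 Hurwitz units.
-/

open Quaternion Pointwise

instance {R : Type*} [DecidableEq R] [Zero R] [One R] [Neg R] : DecidableEq ℍ[R] :=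
  (Quaternion.equivProd R).decidableEq

namespace Quaternion

variable {R S : Type*} [CommRing R] [CommRing S]

-- Built through `equivProd` rather than `⟨_, _, _, _⟩`: the anonymous constructor elaborates at
-- type `QuaternionAlgebra S (-1) 0 (-1)`, where the simp lemmas about `ℍ[S]` do not apply.
-- `quat` below exists for the same reason.
def map (f : R →+* S) : ℍ[R] →+* ℍ[S] where
  toFun x := (Quaternion.equivProd S).symm (f x.re, f x.imI, f x.imJ, f x.imK)
  map_one' := by ext <;> simp
  map_mul' x y := by
    ext <;> simp only [re_mul, imI_mul, imJ_mul, imK_mul] <;> simp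
  map_zero' := by ext <;> simp
  map_add' x y := by
    ext <;> simp only [re_add, imI_add, imJ_add, imK_add] <;> simp

theorem map_star (f : R →+* S) (x : ℍ[R]) : map f (star x) = star (map f x) := by
  ext <;> simp [map]

theorem map_injective {f : R →+* S} (hf : Function.Injective f) :
    Function.Injective (map f) := fun x y h => by
  ext
  exacts [hf congr(($h).re), hf congr(($h).imI), hf congr(($h).imJ), hf congr(($h).imK)]

end Quaternion

def quat (a b c d : ℤ) : ℍ[ℤ] := ⟨a, b, c, d⟩

def signs : List ℤ := [1, -1]

def intRootsA3 : List ℍ[ℤ] :=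
  signs.flatMap fun m => signs.flatMap fun n => [quat 0 m n 0, quat 0 m 0 n, quat 0 0 m n]

def doubledHurwitzUnits : List ℍ[ℤ] :=
  [quat 2 0 0 0, quat (-2) 0 0 0, quat 0 2 0 0, quat 0 (-2) 0 0,
    quat 0 0 2 0, quat 0 0 (-2) 0, quat 0 0 0 2, quat 0 0 0 (-2)] ++
    signs.flatMap fun a => signs.flatMap fun b => signs.flatMap fun c => signs.map fun d =>
      quat a b c d

def halve (c : ℍ[ℤ]) : ℍ[ℝ] := (2 : ℝ)⁻¹ • map (Int.castRingHom ℝ) c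

def divSqrtTwo (a : ℍ[ℤ]) : ℍ[ℝ] := (√2)⁻¹ • map (Int.castRingHom ℝ) a

theorem divSqrtTwo_mul_divSqrtTwo (a b : ℍ[ℤ]) :
    divSqrtTwo a * divSqrtTwo b = halve (a * b) := by
  have hs : (√2)⁻¹ * (√2)⁻¹ = (2 : ℝ)⁻¹ := by
    rw [← mul_inv, Real.mul_self_sqrt zero_le_two]
  rw [divSqrtTwo, divSqrtTwo, halve, smul_mul_smul_comm, hs, map_mul]

theorem halve_mul_halve {c d e : ℍ[ℤ]} (h : c * d = 2 * e) : halve c * halve d = halve e := by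
  rw [halve, halve, halve, smul_mul_smul_comm, ← map_mul, h, map_mul, map_ofNat, two_mul]
  module

theorem star_halve (c : ℍ[ℤ]) : star (halve c) = halve (star c) := by
  rw [halve, halve, Quaternion.star_smul, Quaternion.map_star]

theorem halve_two : halve 2 = 1 := by
  rw [halve, map_ofNat, inv_smul_eq_iff₀ two_ne_zero, two_smul, one_add_one_eq_two]

theorem halve_injective : Function.Injective halve :=
  (smul_right_injective _ (by norm_num)).comp (map_injective Int.cast_injective)

theorem intCast_quat (a b c d : ℤ) :
    map (Int.castRingHom ℝ) (quat a b c d) =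
      (a : ℝ) • 1 + (b : ℝ) • qi + (c : ℝ) • qj + (d : ℝ) • qk := by
  ext <;> simp only [re_add, imI_add, imJ_add, imK_add, re_smul, imI_smul, imJ_smul, imK_smul] <;>
    simp [map, quat, qi, qj, qk]

theorem divSqrtTwo_quat (a b c d : ℤ) :
    divSqrtTwo (quat a b c d) =
      (√2)⁻¹ • ((a : ℝ) • 1 + (b : ℝ) • qi + (c : ℝ) • qj + (d : ℝ) • qk) := by
  rw [divSqrtTwo, intCast_quat]

theorem halve_quat (a b c d : ℤ) :
    halve (quat a b c d) =
      (2 : ℝ)⁻¹ • ((a : ℝ) • 1 + (b : ℝ) • qi + (c : ℝ) • qj + (d : ℝ) • qk) := by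
  rw [halve, intCast_quat]

theorem mem_pm_iff {ε : ℝ} : ε ∈ pm ↔ ∃ n ∈ signs, (n : ℝ) = ε := by
  simp [pm, signs, eq_comm]

theorem rootsA3_eq_image : rootsA3 = divSqrtTwo '' {a | a ∈ intRootsA3} := by
  ext x
  simp only [rootsA3, mem_pm_iff, Set.mem_image, Set.mem_ofPred_eq, intRootsA3, List.mem_flatMap]
  constructor
  · rintro ⟨_, ⟨m, hm, rfl⟩, _, ⟨n, hn, rfl⟩, rfl | rfl | rfl⟩
    · exact ⟨quat 0 m n 0, ⟨m, hm, n, hn, by simp⟩, by simp [divSqrtTwo_quat]⟩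
    · exact ⟨quat 0 m 0 n, ⟨m, hm, n, hn, by simp⟩, by simp [divSqrtTwo_quat]⟩
    · exact ⟨quat 0 0 m n, ⟨m, hm, n, hn, by simp⟩, by simp [divSqrtTwo_quat]⟩
  · rintro ⟨a, ⟨m, hm, n, hn, ha⟩, rfl⟩
    simp only [List.mem_cons, List.not_mem_nil, or_false] at ha
    rcases ha with rfl | rfl | rfl
    · exact ⟨m, ⟨m, hm, rfl⟩, n, ⟨n, hn, rfl⟩, .inl (by simp [divSqrtTwo_quat])⟩
    · exact ⟨m, ⟨m, hm, rfl⟩, n, ⟨n, hn, rfl⟩, .inr (.inl (by simp [divSqrtTwo_quat]))⟩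
    · exact ⟨m, ⟨m, hm, rfl⟩, n, ⟨n, hn, rfl⟩, .inr (.inr (by simp [divSqrtTwo_quat]))⟩

theorem hurwitzUnits_eq_image : hurwitzUnits = halve '' {c | c ∈ doubledHurwitzUnits} := by
  ext x
  simp only [hurwitzUnits, doubledHurwitzUnits, mem_pm_iff, Set.mem_union, Set.mem_insert_iff,
    Set.mem_singleton_iff, Set.mem_ofPred_eq, Set.mem_image, List.mem_append, List.mem_flatMap,
    List.mem_map]
  constructor
  · rintro ((rfl | rfl | rfl | rfl | rfl | rfl | rfl | rfl) |
      ⟨_, ⟨a, ha, rfl⟩, _, ⟨b, hb, rfl⟩, _, ⟨c, hc, rfl⟩, _, ⟨d, hd, rfl⟩, rfl⟩)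
    exacts [⟨quat 2 0 0 0, .inl (by simp), by simp [halve_quat]⟩,
      ⟨quat (-2) 0 0 0, .inl (by simp), by simp [halve_quat]⟩,
      ⟨quat 0 2 0 0, .inl (by simp), by simp [halve_quat]⟩,
      ⟨quat 0 (-2) 0 0, .inl (by simp), by simp [halve_quat]⟩,
      ⟨quat 0 0 2 0, .inl (by simp), by simp [halve_quat]⟩,
      ⟨quat 0 0 (-2) 0, .inl (by simp), by simp [halve_quat]⟩,
      ⟨quat 0 0 0 2, .inl (by simp), by simp [halve_quat]⟩,
      ⟨quat 0 0 0 (-2), .inl (by simp), by simp [halve_quat]⟩,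
      ⟨quat a b c d, .inr ⟨a, ha, b, hb, c, hc, d, hd, rfl⟩, halve_quat a b c d⟩]
  · rintro ⟨_, h | ⟨a, ha, b, hb, c, hc, d, hd, rfl⟩, rfl⟩
    · simp only [List.mem_cons, List.not_mem_nil, or_false] at h
      left
      rcases h with rfl | rfl | rfl | rfl | rfl | rfl | rfl | rfl <;> simp [halve_quat]
    · exact .inr ⟨a, ⟨a, ha, rfl⟩, b, ⟨b, hb, rfl⟩, c, ⟨c, hc, rfl⟩, d, ⟨d, hd, rfl⟩,
        halve_quat a b c d⟩

theorem intRootsA3_mul_mem :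
    ∀ a ∈ intRootsA3, ∀ b ∈ intRootsA3, a * b ∈ doubledHurwitzUnits := by decide

theorem exists_intRootsA3_mul_eq :
    ∀ c ∈ doubledHurwitzUnits, ∃ a ∈ intRootsA3, ∃ b ∈ intRootsA3, a * b = c := by decide

theorem doubledHurwitzUnits_mul :
    ∀ c ∈ doubledHurwitzUnits, ∀ d ∈ doubledHurwitzUnits,
      ∃ e ∈ doubledHurwitzUnits, c * d = 2 * e := by decide

theorem doubledHurwitzUnits_star :
    ∀ c ∈ doubledHurwitzUnits, star c ∈ doubledHurwitzUnits ∧ c * star c = 4 := by decide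

theorem doubledHurwitzUnits_toFinset_card : doubledHurwitzUnits.toFinset.card = 24 := by decide

theorem intRootsA3_mul_intRootsA3 :
    {a | a ∈ intRootsA3} * {a | a ∈ intRootsA3} = {c | c ∈ doubledHurwitzUnits} := by
  ext c
  simp only [Set.mem_mul, Set.mem_ofPred_eq]
  exact ⟨fun ⟨a, ha, b, hb, hab⟩ => hab ▸ intRootsA3_mul_mem a ha b hb,
    exists_intRootsA3_mul_eq c⟩

theorem rootsA3_mul_rootsA3 : rootsA3 * rootsA3 = hurwitzUnits := by
  rw [rootsA3_eq_image, hurwitzUnits_eq_image, ← intRootsA3_mul_intRootsA3, ← Set.image2_mul,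
    ← Set.image2_mul, Set.image2_image_left, Set.image2_image_right, Set.image_image2]
  simp_rw [divSqrtTwo_mul_divSqrtTwo]

theorem mul_mem_hurwitzUnits {x y : ℍ[ℝ]} (hx : x ∈ hurwitzUnits) (hy : y ∈ hurwitzUnits) :
    x * y ∈ hurwitzUnits := by
  rw [hurwitzUnits_eq_image] at *
  obtain ⟨c, hc, rfl⟩ := hx
  obtain ⟨d, hd, rfl⟩ := hy
  obtain ⟨e, he, hcd⟩ := doubledHurwitzUnits_mul c hc d hd
  exact ⟨e, he, (halve_mul_halve hcd).symm⟩

theorem star_mem_hurwitzUnits {x : ℍ[ℝ]} (hx : x ∈ hurwitzUnits) : star x ∈ hurwitzUnits := by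
  rw [hurwitzUnits_eq_image] at *
  obtain ⟨c, hc, rfl⟩ := hx
  exact ⟨star c, (doubledHurwitzUnits_star c hc).1, (star_halve c).symm⟩

theorem mul_star_of_mem_hurwitzUnits {x : ℍ[ℝ]} (hx : x ∈ hurwitzUnits) : x * star x = 1 := by
  rw [hurwitzUnits_eq_image] at hx
  obtain ⟨c, hc, rfl⟩ := hx
  have h4 : c * star c = 2 * 2 := (doubledHurwitzUnits_star c hc).2
  rw [star_halve, halve_mul_halve h4, halve_two]

theorem isUnit_of_mem_hurwitzUnits {x : ℍ[ℝ]} (hx : x ∈ hurwitzUnits) : IsUnit x :=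
  (left_ne_zero_of_mul_eq_one (mul_star_of_mem_hurwitzUnits hx)).isUnit

def hurwitzUnitGroup : Subgroup ℍ[ℝ]ˣ where
  carrier := {u | (u : ℍ[ℝ]) ∈ hurwitzUnits}
  mul_mem' := mul_mem_hurwitzUnits
  one_mem' := .inl (by simp)
  inv_mem' {u} hu := by
    rw [Set.mem_ofPred_eq, Units.inv_eq_of_mul_eq_one_right (mul_star_of_mem_hurwitzUnits hu)]
    exact star_mem_hurwitzUnits hu

theorem mem_hurwitzUnitGroup {u : ℍ[ℝ]ˣ} : u ∈ hurwitzUnitGroup ↔ (u : ℍ[ℝ]) ∈ hurwitzUnits :=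
  Iff.rfl

theorem image_val_hurwitzUnitGroup :
    Units.val '' (hurwitzUnitGroup : Set ℍ[ℝ]ˣ) = hurwitzUnits := by
  refine subset_antisymm (Set.image_subset_iff.2 fun _ hu => hu) fun x hx => ?_
  obtain ⟨u, rfl⟩ := isUnit_of_mem_hurwitzUnits hx
  exact ⟨u, hx, rfl⟩

theorem rotorGenA3_eq_hurwitzUnitGroup : rotorGenA3 = hurwitzUnitGroup := by
  ext u
  rw [SetLike.mem_coe, mem_hurwitzUnitGroup, ← rootsA3_mul_rootsA3]
  simp [rotorGenA3, Set.mem_mul, eq_comm]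

theorem closure_rotorGenA3 : Subgroup.closure rotorGenA3 = hurwitzUnitGroup := by
  rw [rotorGenA3_eq_hurwitzUnitGroup, Subgroup.closure_eq]

theorem card_hurwitzUnits : Nat.card hurwitzUnits = 24 := by
  rw [hurwitzUnits_eq_image, Nat.card_image_of_injective halve_injective, ← List.coe_toFinset,
    Nat.card_coe_set_eq, Set.ncard_coe_finset, doubledHurwitzUnits_toFinset_card]

/-- The subgroup of `ℍˣ` generated by all products `p·q` of pairs of unit
roots of `A₃` equals the set of the 24 Hurwitz units; in particular the 12
reflections of `A₃` generate exactly 24 rotors (the binary tetrahedral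
group). -/
theorem rotor_group_A3 :
    ((fun u : (Quaternion ℝ)ˣ => (u : Quaternion ℝ)) ''
        ((Subgroup.closure rotorGenA3 : Subgroup (Quaternion ℝ)ˣ) : Set (Quaternion ℝ)ˣ)
      = hurwitzUnits) ∧
    Nat.card (Subgroup.closure rotorGenA3 : Subgroup (Quaternion ℝ)ˣ) = 24 := by
  rw [closure_rotorGenA3]
  refine ⟨image_val_hurwitzUnitGroup, ?_⟩
  rw [← card_hurwitzUnits, ← image_val_hurwitzUnitGroup,
    Nat.card_image_of_injective Units.val_injective]
  rfl
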